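/- Let n ∈ ℕ, let p be a partition of {1, …, 2n}, and let B₁, …, B_n be d×d matrices all of whose entries are 0 or 1, with each row and each column of each B_j containing at most one nonzero entry. Define S(p, d) = Σ δ_{i,p} · b^{(1)}_{i₁,i₂} b^{(2)}_{i₃,i₄} ⋯ b^{(n)}_{i_{2n−1},i_{2n}}, where the sum is over all multi-indices i = (i₁, …, i_{2n}) ∈ {1, …, d}^{2n}, b^{(j)}_{k,ℓ} denotes the (k,ℓ) entry of B_j, and δ_{i,p} = 1 if i_k = i_ℓ whenever k and ℓ lie in the same block of p, and δ_{i,p} = 0 otherwise. Let η = {{1,2}, {3,4}, …, {2n−1, 2n}}. Then S(p, d) ≤ d^{|p ∨ η|}. -/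
import Mathlib


open scoped Classical

/-- The partition `η = {{1,2}, {3,4}, …, {2n-1,2n}}` of `{1, …, 2n}` into consecutive pairs
(here `{0,1}, {2,3}, …` on `Fin (2 * n)`), as a setoid. -/
def pairPartition (n : ℕ) : Setoid (Fin (2 * n)) :=
  Setoid.ker fun i => (i : ℕ) / 2

/-- The sum `S(p, d) = Σ_i δ_{i,p} b⁽¹⁾_{i₁,i₂} b⁽²⁾_{i₃,i₄} ⋯ b⁽ⁿ⁾_{i_{2n-1},i_{2n}}` over
all multi-indices `i : Fin (2 * n) → Fin d`, where `δ_{i,p} = 1` if `i` is constant on the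
blocks of `p` and `0` otherwise. -/
noncomputable def partitionSum {n d : ℕ} (p : Setoid (Fin (2 * n)))
    (B : Fin n → Matrix (Fin d) (Fin d) ℝ) : ℝ :=
  ∑ i : Fin (2 * n) → Fin d,
    (if ∀ k l, p.r k l → i k = i l then (1 : ℝ) else 0) *
      ∏ j : Fin n,
        B j (i ⟨2 * j.1, by have := j.isLt; omega⟩)
          (i ⟨2 * j.1 + 1, by have := j.isLt; omega⟩)

/-- For any partition `p` of `{1, …, 2n}` and any `d × d` matrices `B₁, …, B_n` with entries
in `{0, 1}` having at most one nonzero entry in each row and each column, we have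
`S(p, d) ≤ d ^ |p ∨ η|`, where `η = {{1,2}, {3,4}, …, {2n-1,2n}}`. -/
theorem partitionSum_le (n d : ℕ) (p : Setoid (Fin (2 * n)))
    (B : Fin n → Matrix (Fin d) (Fin d) ℝ)
    (hB : ∀ j k l, B j k l = 0 ∨ B j k l = 1)
    (hrow : ∀ j k l l', B j k l ≠ 0 → B j k l' ≠ 0 → l = l')
    (hcol : ∀ j k k' l, B j k l ≠ 0 → B j k' l ≠ 0 → k = k') :
    partitionSum p B ≤ (d : ℝ) ^ (Nat.card (Quotient (p ⊔ pairPartition n))) := by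
  classical
  set e₁ : Fin n → Fin (2 * n) := fun j => ⟨2 * j.1, by have := j.isLt; omega⟩ with he₁
  set e₂ : Fin n → Fin (2 * n) := fun j => ⟨2 * j.1 + 1, by have := j.isLt; omega⟩ with he₂
  set T : Finset (Fin (2 * n) → Fin d) := Finset.univ.filter (fun i =>
    (∀ k l, p.r k l → i k = i l) ∧ ∀ j : Fin n, B j (i (e₁ j)) (i (e₂ j)) ≠ 0) with hT
  -- Step 1: partitionSum p B ≤ T.card
  have h1 : partitionSum p B ≤ (T.card : ℝ) := by
    rw [partitionSum]
    have : (T.card : ℝ) = ∑ i : Fin (2 * n) → Fin d, if i ∈ T then (1:ℝ) else 0 := by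
      simp
    rw [this]
    apply Finset.sum_le_sum
    intro i _
    by_cases hδ : ∀ k l, p.r k l → i k = i l
    · by_cases hz : ∀ j : Fin n, B j (i (e₁ j)) (i (e₂ j)) ≠ 0
      · have hi : i ∈ T := Finset.mem_filter.mpr ⟨Finset.mem_univ _, hδ, hz⟩
        have : ∏ j : Fin n, B j (i (e₁ j)) (i (e₂ j)) = 1 := by
          apply Finset.prod_eq_one
          intro j _
          rcases hB j (i (e₁ j)) (i (e₂ j)) with h | h
          · exact absurd h (hz j)
          · exact h
        simp only [he₁, he₂] at this
        rw [if_pos hδ, one_mul, this, if_pos hi]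
      · push_neg at hz
        obtain ⟨j, hj⟩ := hz
        have : ∏ j : Fin n, B j (i (e₁ j)) (i (e₂ j)) = 0 :=
          Finset.prod_eq_zero (Finset.mem_univ j) hj
        simp only [he₁, he₂] at this
        rw [this, mul_zero]
        positivity
    · rw [if_neg hδ, zero_mul]
      positivity
  -- Step 2: injectivity-based counting
  have key : ∀ i ∈ T, ∀ i' ∈ T, ∀ a b : Fin (2 * n),
      (p ⊔ pairPartition n) a b → (i a = i' a ↔ i b = i' b) := by
    intro i hi i' hi' a b hab
    simp only [hT, Finset.mem_filter] at hi hi'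
    rw [Setoid.sup_eq_eqvGen] at hab
    induction hab with
    | rel a b h =>
      rcases h with h | h
      · constructor
        · intro _; rw [← hi.2.1 a b h, ← hi'.2.1 a b h]; assumption
        · intro _; rw [hi.2.1 a b h, hi'.2.1 a b h]; assumption
      · -- pairPartition: a.1/2 = b.1/2
        have hd : (a : ℕ) / 2 = (b : ℕ) / 2 := h
        by_cases hab : a = b
        · rw [hab]
        · have hj : (a : ℕ) / 2 < n := by have := a.isLt; omega
          set j : Fin n := ⟨(a : ℕ) / 2, hj⟩ with hjdef
          have hcases : ((a : ℕ) = 2 * j.1 ∧ (b : ℕ) = 2 * j.1 + 1) ∨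
              ((a : ℕ) = 2 * j.1 + 1 ∧ (b : ℕ) = 2 * j.1) := by
            have hne : (a : ℕ) ≠ (b : ℕ) := fun hh => hab (Fin.ext hh)
            simp only [hjdef]
            omega
          have h1 := hi.2.2 j
          have h1' := hi'.2.2 j
          rcases hcases with ⟨ha, hb⟩ | ⟨ha, hb⟩
          · have hea : e₁ j = a := Fin.ext ha.symm
            have heb : e₂ j = b := Fin.ext hb.symm
            rw [← hea, ← heb]
            constructor
            · intro hh
              rw [← hh] at h1'
              exact hrow j _ _ _ h1 h1'
            · intro hh
              rw [← hh] at h1'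
              exact hcol j _ _ _ h1 h1'
          · have hea : e₂ j = a := Fin.ext ha.symm
            have heb : e₁ j = b := Fin.ext hb.symm
            rw [← hea, ← heb]
            constructor
            · intro hh
              rw [← hh] at h1'
              exact hcol j _ _ _ h1 h1'
            · intro hh
              rw [← hh] at h1'
              exact hrow j _ _ _ h1 h1'
    | refl a => rfl
    | symm a b _ ih => exact ih.symm
    | trans a b c _ _ ih1 ih2 => exact ih1.trans ih2
  have h2 : T.card ≤ d ^ (Nat.card (Quotient (p ⊔ pairPartition n))) := by
    have := Finset.card_le_card_of_injOn
      (f := fun (i : Fin (2 * n) → Fin d) => fun c : Quotient (p ⊔ pairPartition n) => i c.out)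
      (s := T) (t := Finset.univ) (fun _ _ => Finset.mem_univ _) ?_
    · calc T.card ≤ (Finset.univ : Finset (Quotient (p ⊔ pairPartition n) → Fin d)).card := this
        _ = d ^ (Nat.card (Quotient (p ⊔ pairPartition n))) := by
          rw [Finset.card_univ, Fintype.card_fun, Fintype.card_fin, Nat.card_eq_fintype_card]
    · intro i hi i' hi' hii
      funext k
      have hk : (p ⊔ pairPartition n) (⟦k⟧ : Quotient (p ⊔ pairPartition n)).out k :=
        Quotient.exact (Quotient.out_eq _)
      have := (key i hi i' hi' _ k hk).mp (congrFun hii ⟦k⟧)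
      exact this
  calc partitionSum p B ≤ (T.card : ℝ) := h1
    _ ≤ ((d : ℝ)) ^ (Nat.card (Quotient (p ⊔ pairPartition n))) := by
        exact_mod_cast Nat.cast_le.mpr h2
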